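/- arXiv:1406.3739 — 2 statements merged into one kernel-verified Lean document; each statement's English description precedes it below -/
import Mathlib

section
/- Let δ : (0,∞) → ℝ be continuous and bounded, and suppose N, L → ∞ with N/L → √E/π for some E > 0. Then (1/L)·Σ_{n=1}^N 2·δ(nπ/L)·(nπ/L) − ( (1/π)·∫_0^{(Nπ/L)²} δ(√x) dx + (1/L)·δ(√E)·√E ) = o(1/L), provided δ is C¹ with bounded derivative and x·δ(x) has bounded second derivative contribution so that the second-order Euler–MacLaurin formula applies. -/
/-!
With `h = π / L` and `g u = 2 δ(u) u`, the substitution `x = u²` turns the claim into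
`∑_{n=1}^N g(nh) - (1/h) ∫₀^{Nh} g → g(√E)/2`. On `[h, Nh]` the sum is the trapezoidal rule for `g`
plus the end corrections `(g h + g (Nh))/2`; since `g'' = 2(2δ' + uδ'')` is bounded, the trapezoid
error is `O(N h³) = o(h)` while `Nh → √E`. The first cell `[0, h]`, where `g` need not be smooth,
contributes `O(h)` because `|g u| ≤ 2 (sup |δ|) u`, and `g(Nh)/2 → g(√E)/2 = δ(√E) √E`.
-/

open Real MeasureTheory Set Filter Topology

theorem integral_comp_sqrt {E : Type*} [NormedAddCommGroup E] [NormedSpace ℝ E]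
    (φ : ℝ → E) {b : ℝ} (hb : 0 ≤ b) :
    ∫ x in (0 : ℝ)..b ^ 2, φ (√x) = ∫ u in (0 : ℝ)..b, (2 * u) • φ u := by
  have himage : (· ^ 2) '' Ioc (0 : ℝ) b = Ioc 0 (b ^ 2) := by
    ext x
    constructor
    · rintro ⟨u, hu, rfl⟩
      exact ⟨pow_pos hu.1 2, pow_le_pow_left₀ hu.1.le hu.2 2⟩
    · rintro ⟨hx0, hxb⟩
      refine ⟨√x, ⟨sqrt_pos.2 hx0, ?_⟩, sq_sqrt hx0.le⟩
      simpa [sqrt_sq hb] using sqrt_le_sqrt hxb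
  rw [intervalIntegral.integral_of_le (by positivity), intervalIntegral.integral_of_le hb,
    ← himage, integral_image_eq_integral_abs_deriv_smul measurableSet_Ioc
      (fun x _ => (hasDerivAt_pow 2 x).hasDerivWithinAt)
      ((pow_left_strictMonoOn₀ two_ne_zero).injOn.mono fun x hx => le_of_lt hx.1)]
  refine setIntegral_congr_fun measurableSet_Ioc fun u hu => ?_
  simp [sqrt_sq hu.1.le, abs_of_pos hu.1]

theorem trapezoidal_integral_eq_mul_sum_Icc (f : ℝ → ℝ) {N : ℕ} (hN : 1 < N) (h : ℝ) :
    trapezoidal_integral f (N - 1) h (N * h)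
      = h * (∑ n ∈ Finset.Icc 1 N, f (n * h) - (f h + f (N * h)) / 2) := by
  obtain ⟨m, rfl⟩ : ∃ m, N = m + 2 := ⟨N - 2, by omega⟩
  have hnodes : ∀ k : ℕ, h + (k + 1) * ((m + 2 : ℕ) * h - h) / (m + 1 : ℕ) = (k + 2 : ℕ) * h := by
    intro k; push_cast; field_simp; ring
  have hsum : ∑ n ∈ Finset.Icc 1 (m + 2), f (n * h)
      = f h + ∑ k ∈ Finset.range m, f ((k + 2 : ℕ) * h) + f ((m + 2 : ℕ) * h) := by
    rw [← Finset.Ico_add_one_right_eq_Icc, Finset.sum_Ico_eq_sum_range,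
      show m + 2 + 1 - 1 = m + 1 + 1 by omega, Finset.sum_range_succ, Finset.sum_range_succ']
    simp only [show ∀ k, 1 + (k + 1) = k + 2 by omega, add_zero, Nat.cast_one, one_mul]
    ring
  rw [trapezoidal_integral, show m + 2 - 1 = m + 1 by omega, Nat.add_sub_cancel]
  simp only [hnodes, hsum]
  field_simp
  push_cast
  ring

theorem abs_trapezoidal_error_le_of_hasDerivAt {f f' f'' : ℝ → ℝ} {a b C : ℝ} (hab : a < b)
    (hf : ∀ x ∈ Icc a b, HasDerivAt f (f' x) x) (hf' : ∀ x ∈ Icc a b, HasDerivAt f' (f'' x) x)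
    (hC : ∀ x ∈ Icc a b, |f'' x| ≤ C) {N : ℕ} (hN : 0 < N) :
    |trapezoidal_error f N a b| ≤ (b - a) ^ 3 * C / (12 * N ^ 2) := by
  have hunique := uniqueDiffOn_Icc hab
  have hderiv : EqOn (derivWithin f (Icc a b)) f' (Icc a b) := fun x hx =>
    (hf x hx).hasDerivWithinAt.derivWithin (hunique x hx)
  have hderiv2 : ∀ x ∈ Icc a b, HasDerivWithinAt (derivWithin f (Icc a b)) (f'' x) (Icc a b) x :=
    fun x hx => (hf' x hx).hasDerivWithinAt.congr hderiv (hderiv hx)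
  have hbound : ∀ x, |iteratedDerivWithin 2 f (Icc a b) x| ≤ C := by
    intro x
    rw [iteratedDerivWithin_succ, iteratedDerivWithin_one]
    by_cases hx : x ∈ Icc a b
    · rw [(hderiv2 x hx).derivWithin (hunique x hx)]
      exact hC x hx
    · rw [derivWithin_zero_of_notMem_closure (by rwa [closure_Icc]), abs_zero]
      exact (abs_nonneg _).trans (hC a (left_mem_Icc.2 hab.le))
  have h := trapezoidal_error_le (f := f) (a := a) (b := b) (ζ := C)
    (by rw [uIcc_of_le hab.le]; exact fun x hx => (hf x hx).differentiableAt.differentiableWithinAt)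
    (by rw [uIcc_of_le hab.le]; exact fun x hx => (hderiv2 x hx).differentiableWithinAt)
    (by rwa [uIcc_of_le hab.le]) hN
  rwa [abs_of_pos (sub_pos.2 hab)] at h

theorem intervalIntegrable_of_abs_le_mul {g : ℝ → ℝ} {K b : ℝ} (hg : ContinuousOn g (Ioi 0))
    (hK : ∀ x > 0, |g x| ≤ K * x) (hb : 0 ≤ b) : IntervalIntegrable g volume 0 b := by
  rw [intervalIntegrable_iff_integrableOn_Ioc_of_le hb]
  refine IntegrableOn.of_bound measure_Ioc_lt_top
    ((hg.mono fun x hx => hx.1).aestronglyMeasurable measurableSet_Ioc) (K * b) ?_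
  filter_upwards [ae_restrict_mem measurableSet_Ioc] with x hx
  calc ‖g x‖ ≤ K * x := hK x hx.1
    _ ≤ K * b := by
      have hK₀ : 0 ≤ K := nonneg_of_mul_nonneg_left ((abs_nonneg _).trans (hK x hx.1)) hx.1
      gcongr
      exact hx.2

theorem sum_Icc_sub_integral_eq {g : ℝ → ℝ} {N : ℕ} (hN : 1 < N) {h : ℝ} (hh : h ≠ 0)
    (hg₀ : IntervalIntegrable g volume 0 h) (hg₁ : IntervalIntegrable g volume h (N * h)) :
    ∑ n ∈ Finset.Icc 1 N, g (n * h) - (1 / h) * ∫ u in (0 : ℝ)..N * h, g u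
      = trapezoidal_error g (N - 1) h (N * h) / h + (g h + g (N * h)) / 2
        - (1 / h) * ∫ u in (0 : ℝ)..h, g u := by
  rw [trapezoidal_error, trapezoidal_integral_eq_mul_sum_Icc g hN,
    ← intervalIntegral.integral_add_adjacent_intervals hg₀ hg₁]
  generalize ∑ n ∈ Finset.Icc 1 N, g (n * h) = S
  field_simp
  ring

theorem abs_sum_Icc_sub_integral_sub_le {g g' g'' : ℝ → ℝ} {C K : ℝ}
    (hg : ∀ x > 0, HasDerivAt g (g' x) x) (hg' : ∀ x > 0, HasDerivAt g' (g'' x) x)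
    (hC : ∀ x > 0, |g'' x| ≤ C) (hK : ∀ x > 0, |g x| ≤ K * x)
    {N : ℕ} (hN : 1 < N) {h : ℝ} (hh : 0 < h) :
    |∑ n ∈ Finset.Icc 1 N, g (n * h) - (1 / h) * (∫ u in (0 : ℝ)..N * h, g u) - g (N * h) / 2|
      ≤ (N - 1) * h ^ 2 * C / 12 + 3 * K * h / 2 := by
  have hK₀ : 0 ≤ K := nonneg_of_mul_nonneg_left ((abs_nonneg _).trans (hK h hh)) hh
  have hNh : h < N * h := lt_mul_of_one_lt_left hh (by exact_mod_cast hN)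
  have hcont : ContinuousOn g (Ioi 0) := fun x hx => (hg x hx).continuousAt.continuousWithinAt
  have hg₀ := intervalIntegrable_of_abs_le_mul hcont hK hh.le
  have hg₁ : IntervalIntegrable g volume h (N * h) :=
    (hcont.mono fun x hx => hh.trans_le (uIcc_of_le hNh.le ▸ hx).1).intervalIntegrable
  have hN₁ : ((N - 1 : ℕ) : ℝ) = N - 1 := by rw [Nat.cast_sub hN.le, Nat.cast_one]
  have herr : |trapezoidal_error g (N - 1) h (N * h) / h| ≤ (N - 1) * h ^ 2 * C / 12 := by
    have := abs_trapezoidal_error_le_of_hasDerivAt hNh (fun x hx => hg x (hh.trans_le hx.1))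
      (fun x hx => hg' x (hh.trans_le hx.1)) (fun x hx => hC x (hh.trans_le hx.1))
      (Nat.sub_pos_of_lt hN)
    rw [hN₁] at this
    rw [abs_div, abs_of_pos hh, div_le_iff₀ hh]
    refine this.trans_eq ?_
    have : (N : ℝ) - 1 ≠ 0 := sub_ne_zero.2 (by exact_mod_cast hN.ne')
    field_simp
  have hhead : |(1 / h) * ∫ u in (0 : ℝ)..h, g u| ≤ K * h := by
    have hbound : ∀ x ∈ uIoc 0 h, ‖g x‖ ≤ K * h := fun x hx => by
      rw [uIoc_of_le hh.le] at hx
      exact (hK x hx.1).trans (by gcongr; exact hx.2)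
    have := intervalIntegral.norm_integral_le_of_norm_le_const hbound
    rw [sub_zero, abs_of_pos hh] at this
    rw [abs_mul, abs_of_pos (one_div_pos.2 hh)]
    calc 1 / h * |∫ u in (0 : ℝ)..h, g u| ≤ 1 / h * (K * h * h) := by gcongr; exact this
      _ = K * h := by field_simp
  have hfirst : |g h| ≤ K * h := hK h hh
  rw [sum_Icc_sub_integral_eq hN hh.ne' hg₀ hg₁]
  rw [abs_le] at herr hhead hfirst ⊢
  constructor <;> linarith [herr.1, herr.2, hhead.1, hhead.2, hfirst.1, hfirst.2]

theorem tendsto_sum_Icc_sub_integral {g g' g'' : ℝ → ℝ} {C K : ℝ}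
    (hg : ∀ x > 0, HasDerivAt g (g' x) x) (hg' : ∀ x > 0, HasDerivAt g' (g'' x) x)
    (hC : ∀ x > 0, |g'' x| ≤ C) (hK : ∀ x > 0, |g x| ≤ K * x)
    {ι : Type*} {l : Filter ι} {N : ι → ℕ} {h : ι → ℝ} {b : ℝ} (hb : 0 < b)
    (hN : Tendsto N l atTop) (hh : Tendsto h l (𝓝[>] 0))
    (hNh : Tendsto (fun i => N i * h i) l (𝓝 b)) :
    Tendsto (fun i => ∑ n ∈ Finset.Icc 1 (N i), g (n * h i)
      - (1 / h i) * ∫ u in (0 : ℝ)..N i * h i, g u) l (𝓝 (g b / 2)) := by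
  have hbound : Tendsto (fun i => N i * h i * h i * C / 12 + 3 * K * h i / 2) l (𝓝 0) := by
    have h0 : Tendsto h l (𝓝 0) := tendsto_nhdsWithin_iff.1 hh |>.1
    simpa using ((hNh.mul h0).mul_const C).div_const 12 |>.add ((h0.const_mul (3 * K)).div_const 2)
  have herror : Tendsto (fun i => ∑ n ∈ Finset.Icc 1 (N i), g (n * h i)
      - (1 / h i) * (∫ u in (0 : ℝ)..N i * h i, g u) - g (N i * h i) / 2) l (𝓝 0) := by
    refine squeeze_zero_norm' ?_ hbound
    filter_upwards [hN.eventually_gt_atTop 1, tendsto_nhdsWithin_iff.1 hh |>.2] with i hNi hhi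
    refine (abs_sum_Icc_sub_integral_sub_le hg hg' hC hK hNi hhi).trans ?_
    have hC₀ : 0 ≤ C := (abs_nonneg _).trans (hC 1 one_pos)
    have : 0 ≤ h i ^ 2 * C := by positivity
    nlinarith
  have hlast : Tendsto (fun i => g (N i * h i) / 2) l (𝓝 (g b / 2)) :=
    ((hg b hb).continuousAt.tendsto.comp hNh).div_const 2
  simpa using herror.add hlast

theorem tendsto_sum_Icc_two_mul_mul_sub_integral {δ δ' δ'' : ℝ → ℝ} {Mδ M : ℝ}
    (hδb : ∀ x > (0 : ℝ), |δ x| ≤ Mδ)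
    (hd1 : ∀ x > (0 : ℝ), HasDerivAt δ (δ' x) x)
    (hd2 : ∀ x > (0 : ℝ), HasDerivAt δ' (δ'' x) x)
    (hM : ∀ x > (0 : ℝ), |2 * δ' x + x * δ'' x| ≤ M)
    {ι : Type*} {l : Filter ι} {N : ι → ℕ} {h : ι → ℝ} {b : ℝ} (hb : 0 < b)
    (hN : Tendsto N l atTop) (hh : Tendsto h l (𝓝[>] 0))
    (hNh : Tendsto (fun i => N i * h i) l (𝓝 b)) :
    Tendsto (fun i => ∑ n ∈ Finset.Icc 1 (N i), 2 * δ (n * h i) * (n * h i)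
      - (1 / h i) * ∫ u in (0 : ℝ)..N i * h i, 2 * δ u * u) l (𝓝 (δ b * b)) := by
  have hg : ∀ x > (0 : ℝ), HasDerivAt (fun u => 2 * δ u * u) (2 * δ' x * x + 2 * δ x) x :=
    fun x hx => by simpa using ((hd1 x hx).const_mul 2).fun_mul (hasDerivAt_id' x)
  have hg' : ∀ x > (0 : ℝ), HasDerivAt (fun u => 2 * δ' u * u + 2 * δ u)
      (2 * (2 * δ' x + x * δ'' x)) x := fun x hx => by
    refine (((hd2 x hx).const_mul 2).fun_mul (hasDerivAt_id' x)).add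
      ((hd1 x hx).const_mul 2) |>.congr_deriv ?_
    ring
  have hC : ∀ x > (0 : ℝ), |2 * (2 * δ' x + x * δ'' x)| ≤ 2 * M := fun x hx => by
    rw [abs_mul, abs_two]; linarith [hM x hx]
  have hK : ∀ x > (0 : ℝ), |2 * δ x * x| ≤ 2 * Mδ * x := fun x hx => by
    rw [abs_mul, abs_mul, abs_two, abs_of_pos hx]; gcongr; exact hδb x hx
  convert tendsto_sum_Icc_sub_integral hg hg' hC hK hb hN hh hNh using 2
  ring

theorem sum_two_delta_asymptotics_general (δ δ' δ'' : ℝ → ℝ) (E : ℝ) (hE : 0 < E)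
    (Mδ M : ℝ)
    (hδb : ∀ x > (0 : ℝ), |δ x| ≤ Mδ)
    (hd1 : ∀ x > (0 : ℝ), HasDerivAt δ (δ' x) x)
    (hd2 : ∀ x > (0 : ℝ), HasDerivAt δ' (δ'' x) x)
    (hM : ∀ x > (0 : ℝ), |2 * δ' x + x * δ'' x| ≤ M)
    (N : ℕ → ℕ) (L : ℕ → ℝ)
    (hN : Tendsto N atTop atTop) (hL : Tendsto L atTop atTop)
    (hNL : Tendsto (fun j => (N j : ℝ) / L j) atTop (𝓝 (Real.sqrt E / π))) :
    Tendsto (fun j => L j *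
        ((1 / L j) * ∑ n ∈ Finset.Icc 1 (N j), 2 * δ ((n : ℝ) * π / L j) * ((n : ℝ) * π / L j)
          - ((1 / π) * (∫ x in (0 : ℝ)..(((N j : ℝ) * π / L j) ^ 2), δ (Real.sqrt x))
            + (1 / L j) * δ (Real.sqrt E) * Real.sqrt E)))
      atTop (𝓝 0) := by
  have hh : Tendsto (fun j => π / L j) atTop (𝓝[>] 0) :=
    tendsto_nhdsWithin_iff.2 ⟨tendsto_const_nhds.div_atTop hL,
      (hL.eventually_gt_atTop 0).mono fun j hj => div_pos pi_pos hj⟩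
  have hNh : Tendsto (fun j => N j * (π / L j)) atTop (𝓝 √E) := by
    convert hNL.mul_const π using 1
    · ext j; ring
    · field_simp
  have key := (tendsto_sum_Icc_two_mul_mul_sub_integral hδb hd1 hd2 hM (sqrt_pos.2 hE) hN hh
    hNh).sub_const (δ √E * √E)
  rw [sub_self] at key
  refine key.congr' ?_
  filter_upwards [hL.eventually_gt_atTop 0] with j hLj
  have hsubst : ∫ x in (0 : ℝ)..((N j : ℝ) * π / L j) ^ 2, δ √x
      = ∫ u in (0 : ℝ)..N j * (π / L j), 2 * δ u * u := by
    rw [integral_comp_sqrt _ (by positivity), mul_div_assoc]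
    exact intervalIntegral.integral_congr fun u _ => by simp only [smul_eq_mul]; ring
  rw [hsubst]
  simp only [mul_div_assoc]
  generalize ∑ n ∈ Finset.Icc 1 (N j), 2 * δ (n * (π / L j)) * (n * (π / L j)) = S
  field_simp
  ring

/-- Asymptotics of the sum `(1/L)Σ 2δ(nπ/L)(nπ/L)`: it equals
`(1/π)∫_0^{(Nπ/L)²} δ(√x) dx + (1/L)δ(√E)√E` up to `o(1/L)` as `N, L → ∞` with
`N/L → √E/π`. -/
theorem sum_two_delta_asymptotics (δ δ' δ'' : ℝ → ℝ) (E : ℝ) (hE : 0 < E)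
    (hcont : ContinuousOn δ (Set.Ioi 0)) (Mδ Mδ' M : ℝ)
    (hδb : ∀ x > (0 : ℝ), |δ x| ≤ Mδ)
    (hd1 : ∀ x > (0 : ℝ), HasDerivAt δ (δ' x) x)
    (hδ'b : ∀ x > (0 : ℝ), |δ' x| ≤ Mδ')
    (hd2 : ∀ x > (0 : ℝ), HasDerivAt δ' (δ'' x) x)
    (hM : ∀ x > (0 : ℝ), |2 * δ' x + x * δ'' x| ≤ M)
    (N : ℕ → ℕ) (L : ℕ → ℝ)
    (hN : Tendsto N atTop atTop) (hL : Tendsto L atTop atTop)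
    (hNL : Tendsto (fun j => (N j : ℝ) / L j) atTop (𝓝 (Real.sqrt E / π))) :
    Tendsto (fun j => L j *
        ((1 / L j) * ∑ n ∈ Finset.Icc 1 (N j), 2 * δ ((n : ℝ) * π / L j) * ((n : ℝ) * π / L j)
          - ((1 / π) * (∫ x in (0 : ℝ)..(((N j : ℝ) * π / L j) ^ 2), δ (Real.sqrt x))
            + (1 / L j) * δ (Real.sqrt E) * Real.sqrt E)))
      atTop (𝓝 0) :=
  sum_two_delta_asymptotics_general δ δ' δ'' E hE Mδ M hδb hd1 hd2 hM N L hN hL hNL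
end

section
/- Let δ : (0,∞) → ℝ be C¹ with δ and δ' bounded, and let N, L → ∞ with N/L → √E/π. Then Σ_{n=1}^N (2/L²)·δ'(nπ/L)·δ(nπ/L)·(nπ/L) = (1/(Lπ))·( δ²(√E)·√E − π·∫_0^{N/L} δ²(xπ) dx ) + o(1/L). -/
/-!
Write φ(x) = δ(xπ) and g(x) = 2φ'(x)φ(x)x, so that L times the sum is the right-endpoint
Riemann sum (1/L) Σ g(n/L). Boundedness of δ and δ' makes g continuous on [0, ∞) (it vanishes
at 0), so uniform continuity on a compact interval containing every N/L shows that this Riemann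
sum differs from ∫₀^{N/L} g by o(1). Integration by parts gives ∫₀^a g = φ(a)²a − ∫₀^a φ²,
and φ(N/L)²·N/L → δ(√E)²√E/π by continuity.
-/

open Real MeasureTheory Set Filter Topology

theorem continuousOn_mul_id_Ici {u : ℝ → ℝ} {M : ℝ} (hu : ContinuousOn u (Ioi 0))
    (hM : ∀ x > 0, |u x| ≤ M) : ContinuousOn (fun x => u x * x) (Ici 0) := by
  intro x hx
  rcases (mem_Ici.1 hx).eq_or_lt with rfl | hx0
  · have hbdd : IsBoundedUnder (· ≤ ·) (𝓝[Ici 0] (0 : ℝ)) ((‖·‖) ∘ u) := by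
      refine isBoundedUnder_of_eventually_le (a := max M |u 0|) ?_
      filter_upwards [self_mem_nhdsWithin] with y hy
      rcases (mem_Ici.1 hy).eq_or_lt with rfl | hy0
      · exact le_max_right _ _
      · exact le_max_of_le_left (hM y hy0)
    have := (tendsto_nhdsWithin_of_tendsto_nhds tendsto_id).zero_mul_isBoundedUnder_le hbdd
    simpa [ContinuousWithinAt, mul_comm] using this
  · exact ((hu.continuousAt (Ioi_mem_nhds hx0)).mul continuousAt_id).continuousWithinAt

section RiemannSum

theorem abs_mul_sub_integral_le {f : ℝ → ℝ} {a b ε : ℝ} (hab : a ≤ b)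
    (hf : IntervalIntegrable f volume a b) (hε : ∀ x ∈ Ioc a b, |f b - f x| ≤ ε) :
    |(b - a) * f b - ∫ x in a..b, f x| ≤ (b - a) * ε := by
  have hconst : (b - a) * f b = ∫ _ in a..b, f b := by simp
  rw [hconst, ← intervalIntegral.integral_sub intervalIntegrable_const hf]
  calc |∫ x in a..b, f b - f x| ≤ ε * |b - a| :=
      intervalIntegral.norm_integral_le_of_norm_le_const (f := fun x => f b - f x) fun x hx =>
        hε x (by rwa [uIoc_of_le hab] at hx)
    _ = (b - a) * ε := by rw [abs_of_nonneg (sub_nonneg.2 hab), mul_comm]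

theorem abs_mul_sum_sub_integral_le {f : ℝ → ℝ} {A h ε : ℝ} (hh : 0 < h)
    (hf : ContinuousOn f (Icc 0 A))
    (hε : ∀ x ∈ Icc 0 A, ∀ y ∈ Icc 0 A, |x - y| ≤ h → |f x - f y| ≤ ε)
    (N : ℕ) (hN : N * h ≤ A) :
    |h * ∑ n ∈ Finset.Icc 1 N, f (n * h) - ∫ x in (0 : ℝ)..N * h, f x| ≤ N * h * ε := by
  induction N with
  | zero => simp
  | succ N ih =>
    push_cast at hN ⊢
    have hN0 : 0 ≤ N * h := by positivity
    have hNA : N * h ≤ A := by linarith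
    have hint : ∀ u v, 0 ≤ u → u ≤ v → v ≤ A → IntervalIntegrable f volume u v :=
      fun u v hu huv hv =>
        (hf.mono (by rw [uIcc_of_le huv]; exact Icc_subset_Icc hu hv)).intervalIntegrable
    have hcell := abs_mul_sub_integral_le (f := f) (ε := ε) (a := N * h) (b := (N + 1) * h)
      (by linarith) (hint _ _ hN0 (by linarith) hN) fun x hx =>
        hε _ ⟨by linarith, hN⟩ x ⟨hN0.trans hx.1.le, hx.2.trans hN⟩
          (by rw [abs_of_nonneg (by linarith [hx.2])]; linarith [hx.1])
    rw [Finset.sum_Icc_succ_top (by omega), ← intervalIntegral.integral_add_adjacent_intervals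
      (hint _ _ le_rfl hN0 hNA) (hint _ _ hN0 (by linarith) hN)]
    calc _ = |(h * ∑ n ∈ Finset.Icc 1 N, f (n * h) - ∫ x in (0 : ℝ)..N * h, f x)
          + (((N + 1) * h - N * h) * f ((N + 1) * h) - ∫ x in N * h..(N + 1) * h, f x)| := by
          congr 1; push_cast; ring
      _ ≤ N * h * ε + ((N + 1) * h - N * h) * ε :=
          (abs_add_le _ _).trans (add_le_add (ih hNA) hcell)
      _ = (N + 1) * h * ε := by ring

theorem tendsto_sum_div_sub_integral {ι : Type*} {l : Filter ι} {f : ℝ → ℝ} {A : ℝ}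
    (hf : ContinuousOn f (Icc 0 A)) {N : ι → ℕ} {L : ι → ℝ} (hL : Tendsto L l atTop)
    (hNL : ∀ᶠ j in l, (N j : ℝ) / L j ≤ A) :
    Tendsto (fun j => (∑ n ∈ Finset.Icc 1 (N j), f (n / L j)) / L j
      - ∫ x in (0 : ℝ)..N j / L j, f x) l (𝓝 0) := by
  rw [Metric.tendsto_nhds]
  intro ε hε
  have hε' : 0 < ε / (|A| + 1) := by positivity
  obtain ⟨d, hd, hfd⟩ := Metric.uniformContinuousOn_iff_le.1
    (isCompact_Icc.uniformContinuousOn_of_continuous hf) _ hε'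
  filter_upwards [hNL, hL.eventually_gt_atTop 0, hL.eventually_ge_atTop d⁻¹] with j hjA hj0 hjd
  have hstep : (L j)⁻¹ ≤ d := inv_le_of_inv_le₀ hd hjd
  have hbound := abs_mul_sum_sub_integral_le (inv_pos.2 hj0) hf
    (fun x hx y hy hxy => hfd x hx y hy (hxy.trans hstep)) (N j) (by rwa [← div_eq_mul_inv])
  have hrw : (∑ n ∈ Finset.Icc 1 (N j), f (n / L j)) / L j - ∫ x in (0 : ℝ)..N j / L j, f x
      = (L j)⁻¹ * ∑ n ∈ Finset.Icc 1 (N j), f (n * (L j)⁻¹)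
        - ∫ x in (0 : ℝ)..N j * (L j)⁻¹, f x := by
    simp only [div_eq_mul_inv]
    ring
  rw [Real.dist_eq, sub_zero, hrw]
  calc _ ≤ N j * (L j)⁻¹ * (ε / (|A| + 1)) := hbound
    _ ≤ |A| * (ε / (|A| + 1)) := by
        gcongr
        rw [← div_eq_mul_inv]
        exact hjA.trans (le_abs_self A)
    _ < ε := by
        rw [mul_div_assoc', div_lt_iff₀ (by positivity)]
        linarith

end RiemannSum

section BoundedDerivative

variable {φ φ' : ℝ → ℝ} {M M' : ℝ}

theorem continuousOn_sq_mul_id_Ici (hφ : ∀ x > 0, HasDerivAt φ (φ' x) x)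
    (hφb : ∀ x > 0, |φ x| ≤ M) : ContinuousOn (fun x => φ x ^ 2 * x) (Ici 0) :=
  continuousOn_mul_id_Ici ((HasDerivAt.continuousOn hφ).pow 2) fun x hx => by
    rw [abs_pow]
    exact pow_le_pow_left₀ (abs_nonneg _) (hφb x hx) 2

theorem continuousOn_two_mul_deriv_mul_mul_id_Ici (hφ : ∀ x > 0, HasDerivAt φ (φ' x) x)
    (hφ' : ContinuousOn φ' (Ioi 0)) (hφb : ∀ x > 0, |φ x| ≤ M)
    (hφ'b : ∀ x > 0, |φ' x| ≤ M') :
    ContinuousOn (fun x => 2 * φ' x * φ x * x) (Ici 0) :=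
  continuousOn_mul_id_Ici (M := 2 * (M' * M))
    ((continuousOn_const.mul hφ').mul (HasDerivAt.continuousOn hφ)) fun x hx => by
      rw [abs_mul, abs_mul, abs_two, mul_assoc]
      exact mul_le_mul_of_nonneg_left
        (mul_le_mul (hφ'b x hx) (hφb x hx) (abs_nonneg _) ((abs_nonneg _).trans (hφ'b x hx)))
        two_pos.le

theorem integral_sq_eq_sq_mul_sub_integral (hφ : ∀ x > 0, HasDerivAt φ (φ' x) x)
    (hφ' : ContinuousOn φ' (Ioi 0)) (hφb : ∀ x > 0, |φ x| ≤ M)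
    (hφ'b : ∀ x > 0, |φ' x| ≤ M')
    {a : ℝ} (ha : 0 ≤ a) :
    ∫ x in (0 : ℝ)..a, φ x ^ 2
      = φ a ^ 2 * a - ∫ x in (0 : ℝ)..a, 2 * φ' x * φ x * x := by
  have hsub : uIcc 0 a ⊆ Ici 0 := by
    rw [uIcc_of_le ha]
    exact Icc_subset_Ici_self
  have hg := ((continuousOn_two_mul_deriv_mul_mul_id_Ici hφ hφ' hφb hφ'b).mono
    hsub).intervalIntegrable (μ := volume)
  have hsq : IntervalIntegrable (fun x => φ x ^ 2) volume 0 a := by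
    refine (intervalIntegrable_iff_integrableOn_Ioc_of_le ha).2
      (IntegrableOn.of_bound measure_Ioc_lt_top ?_ (M ^ 2) ?_)
    · exact ((HasDerivAt.continuousOn hφ).pow 2 |>.mono
        fun x hx => hx.1).aestronglyMeasurable measurableSet_Ioc
    · refine (ae_restrict_iff' measurableSet_Ioc).2 (ae_of_all _ fun x hx => ?_)
      rw [Real.norm_eq_abs, abs_pow]
      exact pow_le_pow_left₀ (abs_nonneg _) (hφb x hx.1) 2
  have hderiv : ∀ x ∈ Ioo 0 a,
      HasDerivAt (fun x => φ x ^ 2 * x) (2 * φ' x * φ x * x + φ x ^ 2) x := fun x hx => by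
    refine (((hφ x hx.1).fun_pow 2).fun_mul (hasDerivAt_id' x)).congr_deriv ?_
    push_cast
    ring
  have hftc := intervalIntegral.integral_eq_sub_of_hasDeriv_right_of_le ha
    ((continuousOn_sq_mul_id_Ici hφ hφb).mono Icc_subset_Ici_self)
    (fun x hx => (hderiv x hx).hasDerivWithinAt) (hg.add hsq)
  rw [intervalIntegral.integral_add hg hsq] at hftc
  simp only [mul_zero, sub_zero] at hftc
  linarith

theorem tendsto_sum_div_add_integral_sq {ι : Type*} {l : Filter ι} [l.NeBot]
    (hφ : ∀ x > 0, HasDerivAt φ (φ' x) x) (hφ' : ContinuousOn φ' (Ioi 0))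
    (hφb : ∀ x > 0, |φ x| ≤ M) (hφ'b : ∀ x > 0, |φ' x| ≤ M')
    {N : ι → ℕ} {L : ι → ℝ} {a : ℝ}
    (hL : Tendsto L l atTop) (hNL : Tendsto (fun j => (N j : ℝ) / L j) l (𝓝 a)) :
    Tendsto (fun j =>
      (∑ n ∈ Finset.Icc 1 (N j), 2 * φ' (n / L j) * φ (n / L j) * (n / L j)) / L j
      + ∫ x in (0 : ℝ)..N j / L j, φ x ^ 2) l (𝓝 (φ a ^ 2 * a)) := by
  have hNL0 : ∀ᶠ j in l, (N j : ℝ) / L j ∈ Ici 0 :=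
    (hL.eventually_gt_atTop 0).mono fun j hj => div_nonneg (Nat.cast_nonneg _) hj.le
  have ha : 0 ≤ a := ge_of_tendsto hNL hNL0
  have hriemann := tendsto_sum_div_sub_integral (A := a + 1)
    ((continuousOn_two_mul_deriv_mul_mul_id_Ici hφ hφ' hφb hφ'b).mono Icc_subset_Ici_self) hL
    (hNL.eventually_le_const (by linarith))
  have hboundary : Tendsto (fun j => φ (N j / L j) ^ 2 * (N j / L j)) l (𝓝 (φ a ^ 2 * a)) :=
    (continuousOn_sq_mul_id_Ici hφ hφb a ha).tendsto.comp
      (tendsto_nhdsWithin_iff.2 ⟨hNL, hNL0⟩)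
  have hsum := hriemann.add hboundary
  rw [zero_add] at hsum
  refine hsum.congr' ?_
  filter_upwards [hNL0] with j hj
  rw [integral_sq_eq_sq_mul_sub_integral hφ hφ' hφb hφ'b hj]
  ring

end BoundedDerivative

theorem sum_delta_prime_delta_asymptotics_general (δ δ' : ℝ → ℝ) (E : ℝ)
    (Mδ Mδ' : ℝ)
    (hd1 : ∀ x > (0 : ℝ), HasDerivAt δ (δ' x) x)
    (hc : ContinuousOn δ' (Set.Ioi 0))
    (hδb : ∀ x > (0 : ℝ), |δ x| ≤ Mδ)
    (hδ'b : ∀ x > (0 : ℝ), |δ' x| ≤ Mδ')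
    (N : ℕ → ℕ) (L : ℕ → ℝ)
    (hL : Tendsto L atTop atTop)
    (hNL : Tendsto (fun j => (N j : ℝ) / L j) atTop (𝓝 (Real.sqrt E / π))) :
    Tendsto (fun j => L j *
        (∑ n ∈ Finset.Icc 1 (N j),
            (2 / (L j) ^ 2) * δ' ((n : ℝ) * π / L j) * δ ((n : ℝ) * π / L j) * ((n : ℝ) * π / L j)
          - (1 / (L j * π)) * (δ (Real.sqrt E) ^ 2 * Real.sqrt E
            - π * ∫ x in (0 : ℝ)..((N j : ℝ) / L j), δ (x * π) ^ 2)))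
      atTop (𝓝 0) := by
  set φ : ℝ → ℝ := fun x => δ (x * π)
  set φ' : ℝ → ℝ := fun x => δ' (x * π) * π
  have hφ : ∀ x > 0, HasDerivAt φ (φ' x) x := fun x hx =>
    (hd1 _ (mul_pos hx pi_pos)).comp x (hasDerivAt_mul_const π)
  have hφ' : ContinuousOn φ' (Ioi 0) :=
    (hc.comp (continuousOn_id.mul continuousOn_const) fun x hx => mul_pos hx pi_pos).mul
      continuousOn_const
  have hφb : ∀ x > 0, |φ x| ≤ Mδ := fun x hx => hδb _ (mul_pos hx pi_pos)
  have hφ'b : ∀ x > 0, |φ' x| ≤ Mδ' * π := fun x hx => by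
    rw [abs_mul, abs_of_pos pi_pos]
    exact mul_le_mul_of_nonneg_right (hδ'b _ (mul_pos hx pi_pos)) pi_pos.le
  have hlim := tendsto_sum_div_add_integral_sq hφ hφ' hφb hφ'b hL hNL
  have hφE : φ (√E / π) = δ √E := congrArg δ (div_mul_cancel₀ _ pi_ne_zero)
  rw [hφE] at hlim
  refine (tendsto_sub_nhds_zero_iff.2 hlim).congr' ?_
  filter_upwards [hL.eventually_gt_atTop 0] with j hj
  have hsum_eq : ∑ n ∈ Finset.Icc 1 (N j),
        2 / L j ^ 2 * δ' (n * π / L j) * δ (n * π / L j) * (n * π / L j)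
      = (∑ n ∈ Finset.Icc 1 (N j), 2 * φ' (n / L j) * φ (n / L j) * (n / L j))
          / L j / L j := by
    rw [Finset.sum_div, Finset.sum_div]
    refine Finset.sum_congr rfl fun n _ => ?_
    simp only [φ, φ', div_mul_eq_mul_div]
    field_simp
  have hintegral :
      ∫ x in (0 : ℝ)..N j / L j, δ (x * π) ^ 2 = ∫ x in (0 : ℝ)..N j / L j, φ x ^ 2 :=
    rfl
  rw [hsum_eq, hintegral]
  field_simp
  ring

/-- Asymptotics of `Σ (2/L²)δ'(nπ/L)δ(nπ/L)(nπ/L)`: it equals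
`(1/(Lπ))(δ²(√E)√E − π∫_0^{N/L} δ²(xπ) dx)` up to `o(1/L)` as `N, L → ∞` with
`N/L → √E/π`. -/
theorem sum_delta_prime_delta_asymptotics (δ δ' : ℝ → ℝ) (E : ℝ) (hE : 0 < E)
    (Mδ Mδ' : ℝ)
    (hd1 : ∀ x > (0 : ℝ), HasDerivAt δ (δ' x) x)
    (hc : ContinuousOn δ' (Set.Ioi 0))
    (hδb : ∀ x > (0 : ℝ), |δ x| ≤ Mδ)
    (hδ'b : ∀ x > (0 : ℝ), |δ' x| ≤ Mδ')
    (N : ℕ → ℕ) (L : ℕ → ℝ)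
    (hN : Tendsto N atTop atTop) (hL : Tendsto L atTop atTop)
    (hNL : Tendsto (fun j => (N j : ℝ) / L j) atTop (𝓝 (Real.sqrt E / π))) :
    Tendsto (fun j => L j *
        (∑ n ∈ Finset.Icc 1 (N j),
            (2 / (L j) ^ 2) * δ' ((n : ℝ) * π / L j) * δ ((n : ℝ) * π / L j) * ((n : ℝ) * π / L j)
          - (1 / (L j * π)) * (δ (Real.sqrt E) ^ 2 * Real.sqrt E
            - π * ∫ x in (0 : ℝ)..((N j : ℝ) / L j), δ (x * π) ^ 2)))
      atTop (𝓝 0) :=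
  sum_delta_prime_delta_asymptotics_general δ δ' E Mδ Mδ' hd1 hc hδb hδ'b N L hL hNL
end
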